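/- arXiv:math/0701899 — 2 statements merged into one kernel-verified Lean document; each statement's English description precedes it below -/
import Mathlib

section
/- Let G be a second-countable profinite group, μ the normalized Haar probability measure on G, T : G → G a quotient-preserving map, and let F ⊆ F(T) be a collection of open normal subgroups of G forming a base of neighborhoods of the identity, each element of which T factors through. Then T is measure-preserving with respect to μ if and only if for every N ∈ F the induced map T_N : G/N → G/N is bijective; equivalently, if and only if for every N ∈ F and all x, y ∈ G, (T x)⁻¹(T y) ∈ N implies x⁻¹y ∈ N. -/
open MeasureTheory

/-- `T` factors through the quotient map `G → G/N`. -/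
def MapFactorsThrough {G : Type*} [Group G] (T : G → G) (N : Subgroup G) : Prop :=
  ∀ x y : G, x⁻¹ * y ∈ N → (T x)⁻¹ * T y ∈ N

/-- `T` is a quotient-preserving map: the open normal subgroups through whose quotient
maps `T` factors contain a base of neighborhoods of the identity. -/
def QuotientPreserving {G : Type*} [Group G] [TopologicalSpace G] (T : G → G) : Prop :=
  ∀ U ∈ nhds (1 : G), ∃ N : Subgroup G,
    N.Normal ∧ IsOpen (N : Set G) ∧ (N : Set G) ⊆ U ∧ MapFactorsThrough T N

/-!
A map `T` factoring through `G → G/N` for every `N` in a neighbourhood base `𝓕` of open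
subgroups is continuous, and every clopen set of `G` is a union of cosets of some `N ∈ 𝓕`. For
such a set `π_N⁻¹(Q)`, left invariance gives `μ(π_N⁻¹ Q) = #Q · μ(N)`, while
`T⁻¹(π_N⁻¹ Q) = π_N⁻¹(T_N⁻¹ Q)`; so if every `T_N` is a bijection, `T` preserves `μ` on clopen
sets, which form a π-system generating the Borel σ-algebra. Conversely, if `T` preserves `μ`,
the preimage under `T` of each coset (an open set, hence of positive measure) is nonempty, so
every `T_N` is surjective, hence bijective as `G/N` is finite.
-/

open Topology Pointwise

namespace MapFactorsThrough

variable {G : Type*} [Group G] {T : G → G} {N : Subgroup G}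

def quotientMap (hT : MapFactorsThrough T N) : G ⧸ N → G ⧸ N :=
  Quotient.map' T fun x y h =>
    QuotientGroup.leftRel_apply.mpr (hT x y (QuotientGroup.leftRel_apply.mp h))

@[simp]
theorem quotientMap_mk (hT : MapFactorsThrough T N) (x : G) :
    hT.quotientMap (x : G ⧸ N) = (T x : G ⧸ N) :=
  rfl

theorem preimage_preimage_mk (hT : MapFactorsThrough T N) (Q : Set (G ⧸ N)) :
    T ⁻¹' (QuotientGroup.mk ⁻¹' Q) = QuotientGroup.mk ⁻¹' (hT.quotientMap ⁻¹' Q) :=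
  rfl

theorem exists_bijective_iff (hT : MapFactorsThrough T N) :
    (∃ TN : G ⧸ N → G ⧸ N, Function.Bijective TN ∧
        ∀ x : G, TN (QuotientGroup.mk x) = QuotientGroup.mk (T x)) ↔
      Function.Bijective hT.quotientMap := by
  refine ⟨fun ⟨TN, hbij, hTN⟩ => ?_, fun h => ⟨_, h, hT.quotientMap_mk⟩⟩
  convert hbij
  funext q
  induction q using QuotientGroup.induction_on
  simp [hTN]

theorem injective_quotientMap_iff (hT : MapFactorsThrough T N) :
    Function.Injective hT.quotientMap ↔ ∀ x y : G, (T x)⁻¹ * T y ∈ N → x⁻¹ * y ∈ N := by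
  simp [Function.Injective, QuotientGroup.mk_surjective.forall, QuotientGroup.eq]

end MapFactorsThrough

section Topology

variable {G : Type*} [Group G] [TopologicalSpace G] [IsTopologicalGroup G]

theorem continuous_of_mapFactorsThrough {T : G → G} {𝓕 : Set (Subgroup G)}
    (h𝓕 : ∀ N ∈ 𝓕, IsOpen (N : Set G) ∧ MapFactorsThrough T N)
    (hbase : ∀ U ∈ 𝓝 (1 : G), ∃ N ∈ 𝓕, (N : Set G) ⊆ U) : Continuous T := by
  refine continuous_iff_continuousAt.2 fun x U hU => ?_
  have hU' : (T x * ·) ⁻¹' U ∈ 𝓝 1 :=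
    (continuous_const_mul _).continuousAt.preimage_mem_nhds (by simpa using hU)
  obtain ⟨N, hN, hNU⟩ := hbase _ hU'
  obtain ⟨hNo, hfac⟩ := h𝓕 N hN
  have hx : (x⁻¹ * ·) ⁻¹' (N : Set G) ∈ 𝓝 x :=
    (continuous_const_mul _).continuousAt.preimage_mem_nhds
      (by simpa using hNo.mem_nhds N.one_mem)
  exact Filter.mem_map.2 <|
    Filter.mem_of_superset hx fun y hy => by simpa using hNU (hfac x y hy)

theorem IsCompact.exists_eq_preimage_mk {𝓕 : Set (Subgroup G)}
    (hbase : ∀ U ∈ 𝓝 (1 : G), ∃ N ∈ 𝓕, (N : Set G) ⊆ U) {s : Set G} (hsc : IsCompact s)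
    (hso : IsOpen s) : ∃ N ∈ 𝓕, ∃ Q : Set (G ⧸ N), s = QuotientGroup.mk ⁻¹' Q := by
  obtain ⟨V, hV, hsV⟩ := compact_open_separated_mul_right hsc hso subset_rfl
  obtain ⟨N, hN, hNV⟩ := hbase V hV
  refine ⟨N, hN, QuotientGroup.mk '' s, ?_⟩
  rw [QuotientGroup.preimage_image_mk_eq_mul]
  exact (Set.subset_mul_left s N.one_mem).antisymm ((Set.mul_subset_mul_left hNV).trans hsV)

end Topology

theorem QuotientGroup.preimage_mk_singleton_mk {G : Type*} [Group G] (N : Subgroup G)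
    (g : G) :
    QuotientGroup.mk ⁻¹' {(g : G ⧸ N)} = g • (N : Set G) :=
  QuotientGroup.eq_class_eq_leftCoset N g

section Measure

variable {G : Type*} [Group G] [MeasurableSpace G] (μ : Measure G) [μ.IsMulLeftInvariant]

theorem measure_preimage_mk_singleton (N : Subgroup G) (q : G ⧸ N) :
    μ (QuotientGroup.mk ⁻¹' {q}) = μ N := by
  induction q using QuotientGroup.induction_on with
  | H g => rw [QuotientGroup.preimage_mk_singleton_mk, measure_smul]

variable [MeasurableMul G]

theorem measure_preimage_mk {N : Subgroup G} (hN : MeasurableSet (N : Set G))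
    {Q : Set (G ⧸ N)} (hQ : Q.Finite) :
    μ (QuotientGroup.mk ⁻¹' Q) = Q.ncard * μ N := by
  rw [← hQ.coe_toFinset, ← Set.biUnion_preimage_singleton, Finset.set_biUnion_coe,
    measure_biUnion_finset (Set.pairwiseDisjoint_fiber _ _)]
  · simp [measure_preimage_mk_singleton, Set.ncard_eq_toFinset_card Q hQ]
  · intro q _
    induction q using QuotientGroup.induction_on with
    | H g => rw [QuotientGroup.preimage_mk_singleton_mk]; exact hN.const_smul g

theorem MapFactorsThrough.measure_preimage_preimage_mk {T : G → G} {N : Subgroup G}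
    [Finite (G ⧸ N)] (hN : MeasurableSet (N : Set G)) (hT : MapFactorsThrough T N)
    (hbij : Function.Bijective hT.quotientMap) (Q : Set (G ⧸ N)) :
    μ (T ⁻¹' (QuotientGroup.mk ⁻¹' Q)) = μ (QuotientGroup.mk ⁻¹' Q) := by
  rw [hT.preimage_preimage_mk, measure_preimage_mk μ hN (Set.toFinite _),
    measure_preimage_mk μ hN (Set.toFinite _),
    Set.ncard_preimage_of_injective_subset_range hbij.injective
      (by simp [hbij.surjective.range_eq])]

end Measure

section Haar

variable {G : Type*} [Group G] [TopologicalSpace G] [IsTopologicalGroup G] [MeasurableSpace G]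
  [BorelSpace G] (μ : Measure G) [μ.IsHaarMeasure]

theorem MapFactorsThrough.surjective_quotientMap {T : G → G} {N : Subgroup G}
    (hN : IsOpen (N : Set G)) (hT : MapFactorsThrough T N)
    (hμ : ∀ S : Set G, MeasurableSet S → μ (T ⁻¹' S) = μ S) :
    Function.Surjective hT.quotientMap := by
  refine QuotientGroup.mk_surjective.forall.2 fun g => ?_
  have hcoset : IsOpen (QuotientGroup.mk ⁻¹' {(g : G ⧸ N)}) := by
    rw [QuotientGroup.preimage_mk_singleton_mk]
    exact hN.smul g
  have hpos : μ (T ⁻¹' (QuotientGroup.mk ⁻¹' {(g : G ⧸ N)})) ≠ 0 := by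
    rw [hμ _ hcoset.measurableSet]
    exact (hcoset.measure_pos μ ⟨g, rfl⟩).ne'
  obtain ⟨x, hx⟩ := nonempty_of_measure_ne_zero hpos
  exact ⟨x, hx⟩

theorem measurePreserving_of_bijective_quotientMap [CompactSpace G] [T2Space G]
    [TotallyDisconnectedSpace G] [SecondCountableTopology G] {T : G → G}
    {𝓕 : Set (Subgroup G)} (h𝓕 : ∀ N ∈ 𝓕, IsOpen (N : Set G) ∧ MapFactorsThrough T N)
    (hbase : ∀ U ∈ 𝓝 (1 : G), ∃ N ∈ 𝓕, (N : Set G) ⊆ U)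
    (hbij : ∀ N (hN : N ∈ 𝓕), Function.Bijective (h𝓕 N hN).2.quotientMap) :
    MeasurePreserving T μ μ := by
  have hTm : Measurable T := (continuous_of_mapFactorsThrough h𝓕 hbase).measurable
  refine ⟨hTm, (ext_of_generate_finite {s | IsClopen s}
    (BorelSpace.measurable_eq.trans isTopologicalBasis_isClopen.borel_eq_generateFrom)
    (fun s hs t ht _ => hs.inter ht) (fun s hs => ?_) ?_).symm⟩
  · obtain ⟨N, hN, Q, rfl⟩ := hs.isClosed.isCompact.exists_eq_preimage_mk hbase hs.isOpen
    have := Subgroup.quotient_finite_of_isOpen N (h𝓕 N hN).1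
    rw [Measure.map_apply hTm hs.isOpen.measurableSet,
      (h𝓕 N hN).2.measure_preimage_preimage_mk μ (h𝓕 N hN).1.measurableSet (hbij N hN)]
  · rw [Measure.map_apply hTm .univ, Set.preimage_univ]

end Haar

theorem stmt3_general {G : Type*} [Group G] [TopologicalSpace G] [IsTopologicalGroup G]
    [CompactSpace G] [T2Space G] [TotallyDisconnectedSpace G] [SecondCountableTopology G]
    [MeasurableSpace G] [BorelSpace G]
    (μ : Measure G) [μ.IsHaarMeasure]
    (T : G → G)
    (𝓕 : Set (Subgroup G))
    (h𝓕 : ∀ N ∈ 𝓕, N.Normal ∧ IsOpen (N : Set G) ∧ MapFactorsThrough T N)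
    (hbase : ∀ U ∈ nhds (1 : G), ∃ N ∈ 𝓕, (N : Set G) ⊆ U) :
    ((∀ S : Set G, MeasurableSet S → μ (T ⁻¹' S) = μ S) ↔
      ∀ N ∈ 𝓕, ∃ TN : G ⧸ N → G ⧸ N, Function.Bijective TN ∧
        ∀ x : G, TN (QuotientGroup.mk x) = QuotientGroup.mk (T x)) ∧
    ((∀ S : Set G, MeasurableSet S → μ (T ⁻¹' S) = μ S) ↔
      ∀ N ∈ 𝓕, ∀ x y : G, (T x)⁻¹ * T y ∈ N → x⁻¹ * y ∈ N) := by
  have hfac : ∀ N ∈ 𝓕, IsOpen (N : Set G) ∧ MapFactorsThrough T N :=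
    fun N hN => (h𝓕 N hN).2
  have hfin (N) (hN : N ∈ 𝓕) : Finite (G ⧸ N) :=
    Subgroup.quotient_finite_of_isOpen N (hfac N hN).1
  have hmeas : (∀ S : Set G, MeasurableSet S → μ (T ⁻¹' S) = μ S) ↔
      ∀ N (hN : N ∈ 𝓕), Function.Bijective (hfac N hN).2.quotientMap := by
    refine ⟨fun hμ N hN => ?_, fun hbij S hS => ?_⟩
    · have := hfin N hN
      exact Finite.surjective_iff_bijective.1
        ((hfac N hN).2.surjective_quotientMap μ (hfac N hN).1 hμ)
    · exact (measurePreserving_of_bijective_quotientMap μ hfac hbase hbij).measure_preimage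
        hS.nullMeasurableSet
  refine ⟨hmeas.trans (forall₂_congr fun N hN => (hfac N hN).2.exists_bijective_iff).symm,
    hmeas.trans (forall₂_congr fun N hN => ?_).symm⟩
  have := hfin N hN
  rw [← Finite.injective_iff_bijective, MapFactorsThrough.injective_quotientMap_iff]

theorem stmt3 {G : Type*} [Group G] [TopologicalSpace G] [IsTopologicalGroup G]
    [CompactSpace G] [T2Space G] [TotallyDisconnectedSpace G] [SecondCountableTopology G]
    [MeasurableSpace G] [BorelSpace G]
    (μ : Measure G) [μ.IsHaarMeasure] [IsProbabilityMeasure μ]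
    (T : G → G) (hT : QuotientPreserving T)
    (𝓕 : Set (Subgroup G))
    (h𝓕 : ∀ N ∈ 𝓕, N.Normal ∧ IsOpen (N : Set G) ∧ MapFactorsThrough T N)
    (hbase : ∀ U ∈ nhds (1 : G), ∃ N ∈ 𝓕, (N : Set G) ⊆ U) :
    ((∀ S : Set G, MeasurableSet S → μ (T ⁻¹' S) = μ S) ↔
      ∀ N ∈ 𝓕, ∃ TN : G ⧸ N → G ⧸ N, Function.Bijective TN ∧
        ∀ x : G, TN (QuotientGroup.mk x) = QuotientGroup.mk (T x)) ∧
    ((∀ S : Set G, MeasurableSet S → μ (T ⁻¹' S) = μ S) ↔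
      ∀ N ∈ 𝓕, ∀ x y : G, (T x)⁻¹ * T y ∈ N → x⁻¹ * y ∈ N) :=
  stmt3_general μ T 𝓕 h𝓕 hbase
end

section
/- For each rational prime p let T_p : ℤ_p → ℤ_p be a quotient-preserving map that is measure-preserving and ergodic with respect to the Haar probability measure on ℤ_p. Then the product map T = ∏_p T_p acting coordinatewise on G = ∏_p ℤ_p (product over all primes) is a quotient-preserving map that is measure-preserving and ergodic with respect to the product of the Haar probability measures (which is the Haar measure on G). -/
open MeasureTheory

instance (q : Nat.Primes) : Fact (q : ℕ).Prime := ⟨q.2⟩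
noncomputable instance (p : ℕ) [Fact p.Prime] : MeasurableSpace ℤ_[p] := borel _
instance (p : ℕ) [Fact p.Prime] : BorelSpace ℤ_[p] := ⟨rfl⟩

/-- `T` factors through the quotient map `G → G/N` (additive version). -/
def AddMapFactorsThrough {G : Type*} [AddGroup G] (T : G → G) (N : AddSubgroup G) : Prop :=
  ∀ x y : G, x - y ∈ N → T x - T y ∈ N

/-- `T` is a quotient-preserving map: the open subgroups through whose quotient maps
`T` factors contain a base of neighborhoods of `0` (additive, abelian version). -/
def AddQuotientPreserving {G : Type*} [AddGroup G] [TopologicalSpace G] (T : G → G) : Prop :=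
  ∀ U ∈ nhds (0 : G), ∃ N : AddSubgroup G,
    IsOpen (N : Set G) ∧ (N : Set G) ⊆ U ∧ AddMapFactorsThrough T N


/-!
A map `T` that factors through an open subgroup `N` of a compact abelian group `G` induces a map
on the finite set `G ⧸ N`. The cosets of a neighbourhood base of open subgroups, closed under
intersection, form a π-system generating the Borel σ-algebra, so `T` preserves Haar measure as
soon as all the induced maps are bijective. If they are moreover transitive, an invariant set `S`
meets every coset in the proportion `μ S`, so `μ.restrict S = μ S • μ` and `S` is independent of
its complement.

For `∏ q, ℤ_[q]` take the open subgroups `∏ q, M q` with `M q = ⊤` for almost all `q`. Each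
coordinate map is bijective and, being ergodic, transitive on `ℤ_[q] ⧸ M q`, a set whose size is a
power of `q`. By the Chinese remainder theorem, cycles of pairwise coprime lengths combine into a
single cycle on the product of the quotients.
-/

open Function Set Topology

section Factors

variable {G : Type*} [AddCommGroup G] {T : G → G} {N : AddSubgroup G}

namespace AddMapFactorsThrough

def quotientMap (h : AddMapFactorsThrough T N) : G ⧸ N → G ⧸ N :=
  Quotient.map' T fun a b hab => by
    rw [QuotientAddGroup.leftRel_apply, neg_add_eq_sub] at hab ⊢
    exact h b a hab

@[simp]
lemma quotientMap_mk (h : AddMapFactorsThrough T N) (a : G) :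
    h.quotientMap a = (T a : G ⧸ N) :=
  rfl

lemma iterate_quotientMap_mk (h : AddMapFactorsThrough T N) (k : ℕ) (a : G) :
    h.quotientMap^[k] a = (T^[k] a : G ⧸ N) :=
  (Semiconj.iterate_right (f := ((↑) : G → G ⧸ N)) (fun _ => rfl) k a).symm

lemma preimage_mk_preimage (h : AddMapFactorsThrough T N) (A : Set (G ⧸ N)) :
    T ⁻¹' (((↑) : G → G ⧸ N) ⁻¹' A) = (↑) ⁻¹' (h.quotientMap ⁻¹' A) :=
  rfl

lemma preimage_mk_preimage_singleton_quotientMap (h : AddMapFactorsThrough T N)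
    (hinj : Injective h.quotientMap) (c : G ⧸ N) :
    T ⁻¹' (((↑) : G → G ⧸ N) ⁻¹' {h.quotientMap c}) = (↑) ⁻¹' {c} := by
  rw [h.preimage_mk_preimage, ← image_singleton, hinj.preimage_image]

lemma inf {N₁ N₂ : AddSubgroup G} (h₁ : AddMapFactorsThrough T N₁)
    (h₂ : AddMapFactorsThrough T N₂) : AddMapFactorsThrough T (N₁ ⊓ N₂) :=
  fun x y hxy => ⟨h₁ x y hxy.1, h₂ x y hxy.2⟩

lemma top : AddMapFactorsThrough T ⊤ :=
  fun _ _ _ => trivial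

end AddMapFactorsThrough

lemma mem_mk_preimage_singleton_mk {x z : G} :
    z ∈ ((↑) : G → G ⧸ N) ⁻¹' {(x : G ⧸ N)} ↔ z - x ∈ N :=
  QuotientAddGroup.eq_iff_sub_mem

end Factors

section FiniteDynamics

variable {α : Type*} [Finite α] {f : α → α}

lemma Function.Injective.preimage_range_iterate (hf : Injective f) (x : α) :
    f ⁻¹' range (f^[·] x) = range (f^[·] x) := by
  refine Subset.antisymm ?_ fun _ ⟨k, hk⟩ =>
    ⟨k + 1, by simp only [← hk, iterate_succ_apply']⟩
  rintro y ⟨k, hk⟩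
  obtain ⟨n, hn, hny⟩ := hf.mem_periodicPts y
  refine ⟨n - 1 + k, ?_⟩
  dsimp only at hk ⊢
  rw [iterate_add_apply, hk, ← iterate_succ_apply, Nat.succ_eq_add_one, Nat.sub_add_cancel hn,
    hny.eq]

lemma Function.minimalPeriod_eq_natCard (hf : Injective f) (htrans : ∀ x y, ∃ k, f^[k] x = y)
    (x : α) : minimalPeriod f x = Nat.card α := by
  classical
  have := Fintype.ofFinite α
  have hrange : (Finset.range (minimalPeriod f x)).image (f^[·] x) = Finset.univ := by
    refine Finset.eq_univ_of_forall fun y => ?_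
    obtain ⟨k, rfl⟩ := htrans x y
    exact Finset.mem_image.2 ⟨k % minimalPeriod f x, Finset.mem_range.2
      (Nat.mod_lt _ (minimalPeriod_pos_of_mem_periodicPts (hf.mem_periodicPts x))),
      iterate_mod_minimalPeriod_eq⟩
  rw [Nat.card_eq_fintype_card, ← Finset.card_univ, ← hrange,
    Finset.card_image_of_injOn (by simpa using iterate_injOn_Iio_minimalPeriod), Finset.card_range]

lemma exists_iterate_eq_of_coprime_minimalPeriod {ι : Type*} {X : ι → Type*}
    {f : ∀ i, X i → X i} {x y : ∀ i, X i} (s : Finset ι)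
    (hx : ∀ i ∈ s, x i ∈ periodicPts (f i))
    (hcop : (s : Set ι).Pairwise (Nat.Coprime on fun i => minimalPeriod (f i) (x i)))
    (hy : ∀ i ∈ s, ∃ k, (f i)^[k] (x i) = y i) :
    ∃ k, ∀ i ∈ s, (f i)^[k] (x i) = y i := by
  choose! k hk using hy
  obtain ⟨K, hK⟩ := Nat.chineseRemainderOfFinset k _ s
    (fun i hi => (minimalPeriod_pos_of_mem_periodicPts (hx i hi)).ne') hcop
  refine ⟨K, fun i hi => ?_⟩
  rw [← iterate_mod_minimalPeriod_eq, show K % _ = k i % _ from hK i hi,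
    iterate_mod_minimalPeriod_eq, hk i hi]

end FiniteDynamics

section HaarQuotient

variable {G : Type*} [AddCommGroup G] [TopologicalSpace G] [IsTopologicalAddGroup G]
  {N : AddSubgroup G}

lemma isOpen_mk_preimage (hN : IsOpen (N : Set G)) (A : Set (G ⧸ N)) :
    IsOpen (((↑) : G → G ⧸ N) ⁻¹' A) :=
  have := QuotientAddGroup.discreteTopology hN
  (isOpen_discrete A).preimage continuous_quot_mk

variable [MeasurableSpace G] {μ : Measure G}

lemma measure_mk_preimage_singleton [BorelSpace G] [μ.IsAddLeftInvariant] (c : G ⧸ N) :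
    μ (((↑) : G → G ⧸ N) ⁻¹' {c}) = μ N := by
  induction c using QuotientAddGroup.induction_on with | H x =>
  have : ((↑) : G → G ⧸ N) ⁻¹' {(x : G ⧸ N)} = (-x + ·) ⁻¹' N := by
    ext z
    rw [mem_mk_preimage_singleton_mk, mem_preimage, neg_add_eq_sub, SetLike.mem_coe]
  rw [this, measure_preimage_add]

lemma measure_mk_preimage_singleton_ne_zero [μ.IsOpenPosMeasure] (hN : IsOpen (N : Set G))
    (c : G ⧸ N) : μ (((↑) : G → G ⧸ N) ⁻¹' {c}) ≠ 0 :=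
  (isOpen_mk_preimage hN {c}).measure_ne_zero μ
    ((singleton_nonempty c).preimage QuotientAddGroup.mk_surjective)

variable [BorelSpace G] [CompactSpace G] {T : G → G}

namespace AddMapFactorsThrough

lemma injective_quotientMap [μ.IsOpenPosMeasure] (h : AddMapFactorsThrough T N)
    (hN : IsOpen (N : Set G)) (hT : MeasurePreserving T μ μ) : Injective h.quotientMap := by
  have := AddSubgroup.quotient_finite_of_isOpen N hN
  refine Finite.injective_iff_surjective.2 fun d => ?_
  have hd : μ (T ⁻¹' ((↑) ⁻¹' {d})) ≠ 0 := by
    rw [hT.measure_preimage (isOpen_mk_preimage hN _).measurableSet.nullMeasurableSet]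
    exact measure_mk_preimage_singleton_ne_zero hN d
  obtain ⟨a, ha⟩ := nonempty_of_measure_ne_zero hd
  exact ⟨a, ha⟩

/-- The union of the cosets in a forward orbit is an invariant open set. It is not null, so its
complement, also open, is null and hence empty. -/
lemma exists_iterate_quotientMap_eq [μ.IsOpenPosMeasure] [IsProbabilityMeasure μ]
    (h : AddMapFactorsThrough T N) (hN : IsOpen (N : Set G)) (hT : MeasurePreserving T μ μ)
    (hErg : ∀ S, MeasurableSet S → T ⁻¹' S = S → μ S = 0 ∨ μ S = 1) (c d : G ⧸ N) :
    ∃ k, h.quotientMap^[k] c = d := by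
  have := AddSubgroup.quotient_finite_of_isOpen N hN
  set O := range (h.quotientMap^[·] c)
  have hO : T ⁻¹' ((↑) ⁻¹' O) = (↑) ⁻¹' O := by
    rw [h.preimage_mk_preimage, (h.injective_quotientMap hN hT).preimage_range_iterate]
  have hOm := (isOpen_mk_preimage hN O).measurableSet
  rcases hErg _ hOm hO with hO₀ | hO₁
  · refine (measure_mk_preimage_singleton_ne_zero hN c (measure_mono_null ?_ hO₀)).elim
    exact preimage_mono (singleton_subset_iff.2 ⟨0, rfl⟩)
  · rw [← prob_compl_eq_zero_iff hOm, ← preimage_compl] at hO₁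
    by_contra hd
    exact measure_mk_preimage_singleton_ne_zero hN d
      (measure_mono_null (preimage_mono (singleton_subset_iff.2 hd)) hO₁)

lemma measure_eq_natCard_mul_measure_inter [μ.IsOpenPosMeasure]
    (h : AddMapFactorsThrough T N) (hN : IsOpen (N : Set G)) (hT : MeasurePreserving T μ μ)
    (htrans : ∀ c d, ∃ k, h.quotientMap^[k] c = d) {S : Set G} (hS : MeasurableSet S)
    (hST : T ⁻¹' S = S) (c : G ⧸ N) :
    μ S = Nat.card (G ⧸ N) * μ ((↑) ⁻¹' {c} ∩ S) := by
  have := AddSubgroup.quotient_finite_of_isOpen N hN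
  have := Fintype.ofFinite (G ⧸ N)
  have hfiber (d : G ⧸ N) : MeasurableSet (((↑) : G → G ⧸ N) ⁻¹' {d}) :=
    (isOpen_mk_preimage hN _).measurableSet
  have hinv (d : G ⧸ N) : μ ((↑) ⁻¹' {h.quotientMap d} ∩ S) = μ ((↑) ⁻¹' {d} ∩ S) := by
    rw [← hT.measure_preimage ((hfiber _).inter hS).nullMeasurableSet, preimage_inter, hST,
      h.preimage_mk_preimage_singleton_quotientMap (h.injective_quotientMap hN hT)]
  have hconst (d : G ⧸ N) : μ ((↑) ⁻¹' {d} ∩ S) = μ ((↑) ⁻¹' {c} ∩ S) := by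
    obtain ⟨k, rfl⟩ := htrans c d
    induction k with
    | zero => rfl
    | succ k ih => rw [iterate_succ_apply', hinv, ih]
  calc μ S = ∑ d, μ.restrict S (((↑) : G → G ⧸ N) ⁻¹' {d}) := by
        rw [sum_measure_preimage_singleton _ fun d _ => hfiber d, Finset.coe_univ,
          preimage_univ, Measure.restrict_apply_univ]
    _ = Nat.card (G ⧸ N) * μ ((↑) ⁻¹' {c} ∩ S) := by
        simp only [Measure.restrict_apply (hfiber _), hconst, Finset.sum_const, Finset.card_univ,
          nsmul_eq_mul, Nat.card_eq_fintype_card]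

end AddMapFactorsThrough

end HaarQuotient

section Basis

variable {G : Type*} [AddCommGroup G] [TopologicalSpace G]

theorem AddQuotientPreserving.continuous [IsTopologicalAddGroup G] {T : G → G}
    (hT : AddQuotientPreserving T) : Continuous T := by
  refine continuous_iff_continuousAt.2 fun x U hU => ?_
  obtain ⟨N, hN, hNU, hTN⟩ :=
    hT _ ((continuous_add_const (T x)).tendsto' 0 (T x) (zero_add _) hU)
  rw [Filter.mem_map]
  filter_upwards [(continuous_sub_right x).continuousAt.preimage_mem_nhds
    (hN.mem_nhds (by rw [sub_self]; exact N.zero_mem))] with z hz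
  simpa using hNU (hTN z x hz)

structure IsOpenAddSubgroupBasis (𝒩 : Set (AddSubgroup G)) : Prop where
  isOpen : ∀ N ∈ 𝒩, IsOpen (N : Set G)
  inf_mem : ∀ N₁ ∈ 𝒩, ∀ N₂ ∈ 𝒩, N₁ ⊓ N₂ ∈ 𝒩
  exists_subset : ∀ U ∈ 𝓝 (0 : G), ∃ N ∈ 𝒩, (N : Set G) ⊆ U

def cosetsOf (𝒩 : Set (AddSubgroup G)) : Set (Set G) :=
  {C | ∃ N ∈ 𝒩, ∃ c : G ⧸ N, (↑) ⁻¹' {c} = C}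

namespace IsOpenAddSubgroupBasis

variable {𝒩 : Set (AddSubgroup G)} {T : G → G}

lemma addQuotientPreserving (h𝒩 : IsOpenAddSubgroupBasis 𝒩)
    (hfac : ∀ N ∈ 𝒩, AddMapFactorsThrough T N) : AddQuotientPreserving T := fun U hU =>
  let ⟨N, hN, hNU⟩ := h𝒩.exists_subset U hU
  ⟨N, h𝒩.isOpen N hN, hNU, hfac N hN⟩

lemma isPiSystem_cosetsOf (h𝒩 : IsOpenAddSubgroupBasis 𝒩) : IsPiSystem (cosetsOf 𝒩) := by
  rintro _ ⟨N₁, hN₁, c₁, rfl⟩ _ ⟨N₂, hN₂, c₂, rfl⟩ ⟨z, rfl, hz⟩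
  obtain rfl : (z : G ⧸ N₂) = c₂ := hz
  refine ⟨N₁ ⊓ N₂, h𝒩.inf_mem _ hN₁ _ hN₂, z, ?_⟩
  ext w
  simp only [mem_inter_iff, mem_mk_preimage_singleton_mk, AddSubgroup.mem_inf]

variable [IsTopologicalAddGroup G]

lemma isTopologicalBasis_cosetsOf (h𝒩 : IsOpenAddSubgroupBasis 𝒩) :
    TopologicalSpace.IsTopologicalBasis (cosetsOf 𝒩) := by
  refine TopologicalSpace.isTopologicalBasis_of_isOpen_of_nhds ?_ fun a U ha hU => ?_
  · rintro _ ⟨N, hN, c, rfl⟩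
    exact isOpen_mk_preimage (h𝒩.isOpen N hN) _
  · obtain ⟨N, hN, hNU⟩ := h𝒩.exists_subset _
      ((continuous_add_const a).tendsto' 0 a (zero_add a) (hU.mem_nhds ha))
    refine ⟨_, ⟨N, hN, a, rfl⟩, rfl, fun z hz => ?_⟩
    simpa using hNU (mem_mk_preimage_singleton_mk.1 hz)

variable [SecondCountableTopology G] [MeasurableSpace G] [BorelSpace G]

lemma measure_ext (h𝒩 : IsOpenAddSubgroupBasis 𝒩) {ν ν' : Measure G} [IsFiniteMeasure ν]
    (hcoset : ∀ N ∈ 𝒩, ∀ c : G ⧸ N, ν ((↑) ⁻¹' {c}) = ν' ((↑) ⁻¹' {c}))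
    (huniv : ν univ = ν' univ) : ν = ν' :=
  ext_of_generate_finite _
    (BorelSpace.measurable_eq.trans h𝒩.isTopologicalBasis_cosetsOf.borel_eq_generateFrom)
    h𝒩.isPiSystem_cosetsOf (by rintro _ ⟨N, hN, c, rfl⟩; exact hcoset N hN c) huniv

variable [CompactSpace G] {μ : Measure G} [μ.IsAddHaarMeasure] [IsProbabilityMeasure μ]

theorem measurePreserving (h𝒩 : IsOpenAddSubgroupBasis 𝒩)
    (hfac : ∀ N ∈ 𝒩, AddMapFactorsThrough T N) (hTm : Measurable T)
    (hinj : ∀ N (hN : N ∈ 𝒩), Injective (hfac N hN).quotientMap) :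
    MeasurePreserving T μ μ := by
  refine ⟨hTm, h𝒩.measure_ext (fun N hN c => ?_) ?_⟩
  · have := AddSubgroup.quotient_finite_of_isOpen N (h𝒩.isOpen N hN)
    obtain ⟨d, rfl⟩ := Finite.injective_iff_surjective.1 (hinj N hN) c
    rw [Measure.map_apply hTm (isOpen_mk_preimage (h𝒩.isOpen N hN) _).measurableSet,
      (hfac N hN).preimage_mk_preimage_singleton_quotientMap (hinj N hN),
      measure_mk_preimage_singleton, measure_mk_preimage_singleton]
  · rw [Measure.map_apply hTm MeasurableSet.univ, preimage_univ]

theorem prob_eq_zero_or_one (h𝒩 : IsOpenAddSubgroupBasis 𝒩)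
    (hfac : ∀ N ∈ 𝒩, AddMapFactorsThrough T N) (hT : MeasurePreserving T μ μ)
    (htrans : ∀ N (hN : N ∈ 𝒩) (c d : G ⧸ N), ∃ k, (hfac N hN).quotientMap^[k] c = d)
    {S : Set G} (hS : MeasurableSet S) (hST : T ⁻¹' S = S) : μ S = 0 ∨ μ S = 1 := by
  have hindep : μ.restrict S = μ S • μ := by
    refine h𝒩.measure_ext (fun N hN𝒩 c => ?_) (by simp)
    have hN := h𝒩.isOpen N hN𝒩
    have hcount {S'} := (hfac N hN𝒩).measure_eq_natCard_mul_measure_inter (S := S') hN hT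
      (htrans N hN𝒩)
    rw [Measure.restrict_apply (isOpen_mk_preimage hN _).measurableSet, Measure.smul_apply,
      smul_eq_mul]
    calc μ ((↑) ⁻¹' {c} ∩ S)
        = μ ((↑) ⁻¹' {c} ∩ S) * μ univ := by rw [measure_univ, mul_one]
      _ = μ S * μ ((↑) ⁻¹' {c}) := by
        rw [hcount hS hST c, hcount MeasurableSet.univ (preimage_univ) c, inter_univ]
        ring
  have hcompl := congr_arg (· Sᶜ) hindep
  simp only [Measure.restrict_apply hS.compl, compl_inter_self, measure_empty, Measure.smul_apply,
    smul_eq_mul] at hcompl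
  rcases mul_eq_zero.1 hcompl.symm with h | h
  · exact Or.inl h
  · exact Or.inr ((prob_compl_eq_zero_iff hS).1 h)

end IsOpenAddSubgroupBasis

end Basis

section Pi

variable {ι : Type*} {X : ι → Type*} [∀ i, AddCommGroup (X i)] {T : ∀ i, X i → X i}
  {M : ∀ i, AddSubgroup (X i)}

namespace AddMapFactorsThrough

lemma pi (h : ∀ i, AddMapFactorsThrough (T i) (M i)) :
    AddMapFactorsThrough (Pi.map T) (AddSubgroup.pi univ M) :=
  fun x y hxy i _ => h i (x i) (y i) (hxy i trivial)

lemma injective_quotientMap_pi (h : ∀ i, AddMapFactorsThrough (T i) (M i))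
    (hinj : ∀ i, Injective (h i).quotientMap) : Injective (pi h).quotientMap := by
  intro c d hcd
  induction c using QuotientAddGroup.induction_on with | H a =>
  induction d using QuotientAddGroup.induction_on with | H b =>
  rw [quotientMap_mk, quotientMap_mk, QuotientAddGroup.eq_iff_sub_mem] at hcd
  refine QuotientAddGroup.eq_iff_sub_mem.2 fun i _ => QuotientAddGroup.eq_iff_sub_mem.1 (hinj i ?_)
  exact QuotientAddGroup.eq_iff_sub_mem.2 (hcd i trivial)

lemma exists_iterate_quotientMap_pi_eq (h : ∀ i, AddMapFactorsThrough (T i) (M i))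
    [∀ i, Finite (X i ⧸ M i)] (hfin : {i | M i ≠ ⊤}.Finite)
    (hinj : ∀ i, Injective (h i).quotientMap)
    (htrans : ∀ i (c d : X i ⧸ M i), ∃ k, (h i).quotientMap^[k] c = d)
    (hcop : {i | M i ≠ ⊤}.Pairwise (Nat.Coprime on fun i => Nat.card (X i ⧸ M i)))
    (c d : (∀ i, X i) ⧸ AddSubgroup.pi univ M) : ∃ k, (pi h).quotientMap^[k] c = d := by
  induction c using QuotientAddGroup.induction_on with | H a =>
  induction d using QuotientAddGroup.induction_on with | H b =>
  obtain ⟨k, hk⟩ := exists_iterate_eq_of_coprime_minimalPeriod (f := fun i => (h i).quotientMap)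
    (x := fun i => (a i : X i ⧸ M i)) (y := fun i => (b i : X i ⧸ M i)) hfin.toFinset
    (fun i _ => (hinj i).mem_periodicPts _)
    (by simpa only [Finite.coe_toFinset, minimalPeriod_eq_natCard (hinj _) (htrans _)] using hcop)
    (fun i _ => htrans i _ _)
  refine ⟨k, ?_⟩
  rw [iterate_quotientMap_mk, QuotientAddGroup.eq_iff_sub_mem]
  intro i _
  by_cases hi : M i = ⊤
  · simp [hi]
  · have := hk i (hfin.mem_toFinset.2 hi)
    rw [iterate_quotientMap_mk, QuotientAddGroup.eq_iff_sub_mem] at this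
    simpa [Pi.map_iterate] using this

end AddMapFactorsThrough

variable [∀ i, TopologicalSpace (X i)]

lemma isOpen_addSubgroupPi {M : ∀ i, AddSubgroup (X i)} (hM : ∀ i, IsOpen (M i : Set (X i)))
    (hfin : {i | M i ≠ ⊤}.Finite) : IsOpen (AddSubgroup.pi univ M : Set (∀ i, X i)) := by
  have : (AddSubgroup.pi univ M : Set (∀ i, X i)) = {i | M i ≠ ⊤}.pi fun i => M i := by
    ext x
    refine ⟨fun hx i _ => hx i trivial, fun hx i _ => ?_⟩
    by_cases hi : M i = ⊤
    · simp [hi]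
    · exact hx i hi
  rw [this]
  exact isOpen_set_pi hfin fun i _ => hM i

variable (T) in
def piFactorSubgroups : Set (AddSubgroup (∀ i, X i)) :=
  {N | ∃ M : ∀ i, AddSubgroup (X i),
    (∀ i, IsOpen (M i : Set (X i)) ∧ AddMapFactorsThrough (T i) (M i)) ∧
      {i | M i ≠ ⊤}.Finite ∧ AddSubgroup.pi univ M = N}

lemma isOpenAddSubgroupBasis_piFactorSubgroups (hT : ∀ i, AddQuotientPreserving (T i)) :
    IsOpenAddSubgroupBasis (piFactorSubgroups T) where
  isOpen := by
    rintro _ ⟨M, hM, hfin, rfl⟩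
    exact isOpen_addSubgroupPi (fun i => (hM i).1) hfin
  inf_mem := by
    rintro _ ⟨M₁, hM₁, hfin₁, rfl⟩ _ ⟨M₂, hM₂, hfin₂, rfl⟩
    refine ⟨M₁ ⊓ M₂, fun i => ⟨(hM₁ i).1.inter (hM₂ i).1, (hM₁ i).2.inf (hM₂ i).2⟩,
      (hfin₁.union hfin₂).subset fun i hi => ?_, ?_⟩
    · by_contra! h
      simp_all
    · ext x
      simp only [AddSubgroup.mem_inf, AddSubgroup.mem_pi, mem_univ, forall_const, Pi.inf_apply,
        forall_and]
  exists_subset := by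
    classical
    intro U hU
    rw [nhds_pi, Filter.mem_pi] at hU
    obtain ⟨I, hI, t, ht, htU⟩ := hU
    choose M hMo hMt hMf using fun i => hT i (t i) (ht i)
    refine ⟨AddSubgroup.pi univ fun i => if i ∈ I then M i else ⊤,
      ⟨_, fun i => ?_, hI.subset fun i hi => ?_, rfl⟩, fun x hx => htU fun i hi => ?_⟩
    · split_ifs
      · exact ⟨hMo i, hMf i⟩
      · exact ⟨by simp, AddMapFactorsThrough.top⟩
    · by_contra h
      exact hi (if_neg h)
    · have : x i ∈ if i ∈ I then M i else ⊤ := hx i trivial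
      rw [if_pos hi] at this
      exact hMt i this

lemma addMapFactorsThrough_of_mem_piFactorSubgroups {N : AddSubgroup (∀ i, X i)}
    (hN : N ∈ piFactorSubgroups T) : AddMapFactorsThrough (Pi.map T) N := by
  obtain ⟨M, hM, -, rfl⟩ := hN
  exact .pi fun i => (hM i).2

end Pi

namespace PadicInt

variable {p : ℕ} [hp : Fact p.Prime]

lemma ker_toZModPow_le_of_isOpen {M : AddSubgroup ℤ_[p]} (hM : IsOpen (M : Set ℤ_[p])) :
    ∃ n, (toZModPow n : ℤ_[p] →+* ZMod (p ^ n)).toAddMonoidHom.ker ≤ M := by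
  obtain ⟨ε, hε, hball⟩ := Metric.isOpen_iff.1 hM 0 M.zero_mem
  obtain ⟨n, hn⟩ := exists_pow_lt_of_lt_one hε
    (inv_lt_one_of_one_lt₀ (by exact_mod_cast hp.out.one_lt) : (p : ℝ)⁻¹ < 1)
  refine ⟨n, fun x hx => hball ?_⟩
  have hx' : ‖x‖ ≤ (p : ℝ) ^ (-(n : ℤ)) :=
    (norm_le_pow_iff_mem_span_pow x n).2 (ker_toZModPow (p := p) n ▸ hx)
  rw [Metric.mem_ball, dist_zero_right]
  calc ‖x‖ ≤ (p : ℝ) ^ (-(n : ℤ)) := hx'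
    _ = (p : ℝ)⁻¹ ^ n := by rw [zpow_neg, zpow_natCast, inv_pow]
    _ < ε := hn

lemma exists_natCard_quotient_dvd_pow {M : AddSubgroup ℤ_[p]} (hM : IsOpen (M : Set ℤ_[p])) :
    ∃ n, Nat.card (ℤ_[p] ⧸ M) ∣ p ^ n := by
  obtain ⟨n, hn⟩ := ker_toZModPow_le_of_isOpen hM
  refine ⟨n, ?_⟩
  have hindex : (toZModPow n : ℤ_[p] →+* ZMod (p ^ n)).toAddMonoidHom.ker.index = p ^ n := by
    rw [AddSubgroup.index_ker, AddMonoidHom.range_eq_top.2 (ZMod.ringHom_surjective _),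
      AddSubgroup.card_top, Nat.card_zmod]
  rw [← AddSubgroup.index_eq_card, ← hindex]
  exact AddSubgroup.index_dvd_of_le hn

lemma coprime_natCard_quotient {q : ℕ} [Fact q.Prime] (hpq : p ≠ q) {M : AddSubgroup ℤ_[p]}
    {M' : AddSubgroup ℤ_[q]} (hM : IsOpen (M : Set ℤ_[p])) (hM' : IsOpen (M' : Set ℤ_[q])) :
    Nat.Coprime (Nat.card (ℤ_[p] ⧸ M)) (Nat.card (ℤ_[q] ⧸ M')) := by
  obtain ⟨n, hn⟩ := exists_natCard_quotient_dvd_pow hM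
  obtain ⟨n', hn'⟩ := exists_natCard_quotient_dvd_pow hM'
  exact ((Nat.coprime_pow_primes n n' hp.out Fact.out hpq).coprime_dvd_left hn).coprime_dvd_right
    hn'

end PadicInt

theorem stmt18
    (μp : ∀ q : Nat.Primes, Measure ℤ_[(q : ℕ)])
    [∀ q, (μp q).IsAddHaarMeasure] [∀ q, IsProbabilityMeasure (μp q)]
    -- μ is the product of the Haar measures, i.e. the Haar measure on the product group
    (μ : Measure (∀ q : Nat.Primes, ℤ_[(q : ℕ)]))
    [μ.IsAddHaarMeasure] [IsProbabilityMeasure μ]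
    (T : ∀ q : Nat.Primes, ℤ_[(q : ℕ)] → ℤ_[(q : ℕ)])
    (hQP : ∀ q : Nat.Primes, AddQuotientPreserving (T q))
    (hMP : ∀ q : Nat.Primes, ∀ S : Set ℤ_[(q : ℕ)], MeasurableSet S → μp q (T q ⁻¹' S) = μp q S)
    (hErg : ∀ q : Nat.Primes, ∀ S : Set ℤ_[(q : ℕ)], MeasurableSet S → T q ⁻¹' S = S →
      μp q S = 0 ∨ μp q S = 1) :
    -- the product map is quotient-preserving,
    AddQuotientPreserving
      (fun (x : ∀ q : Nat.Primes, ℤ_[(q : ℕ)]) q => T q (x q)) ∧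
    -- measure-preserving,
    (∀ S : Set (∀ q : Nat.Primes, ℤ_[(q : ℕ)]), MeasurableSet S →
      μ ((fun (x : ∀ q : Nat.Primes, ℤ_[(q : ℕ)]) q => T q (x q)) ⁻¹' S) = μ S) ∧
    -- and ergodic
    (∀ S : Set (∀ q : Nat.Primes, ℤ_[(q : ℕ)]), MeasurableSet S →
      (fun (x : ∀ q : Nat.Primes, ℤ_[(q : ℕ)]) q => T q (x q)) ⁻¹' S = S →
      μ S = 0 ∨ μ S = 1) := by
  have hTq (q : Nat.Primes) : MeasurePreserving (T q) (μp q) (μp q) :=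
    ⟨(hQP q).continuous.measurable, Measure.ext fun S hS => by
      rw [Measure.map_apply (hQP q).continuous.measurable hS, hMP q S hS]⟩
  have h𝒩 := isOpenAddSubgroupBasis_piFactorSubgroups hQP
  have hfac (N) (hN : N ∈ piFactorSubgroups T) :=
    addMapFactorsThrough_of_mem_piFactorSubgroups hN
  have hQPpi := h𝒩.addQuotientPreserving hfac
  have hT : MeasurePreserving (Pi.map T) μ μ := by
    refine h𝒩.measurePreserving hfac hQPpi.continuous.measurable ?_
    rintro _ ⟨M, hM, -, rfl⟩
    exact AddMapFactorsThrough.injective_quotientMap_pi _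
      fun q => (hM q).2.injective_quotientMap (hM q).1 (hTq q)
  refine ⟨hQPpi, fun S hS => hT.measure_preimage hS.nullMeasurableSet,
    fun S hS hST => h𝒩.prob_eq_zero_or_one hfac hT ?_ hS hST⟩
  rintro _ ⟨M, hM, hfin, rfl⟩
  have (q : Nat.Primes) := AddSubgroup.quotient_finite_of_isOpen (M q) (hM q).1
  exact AddMapFactorsThrough.exists_iterate_quotientMap_pi_eq _ hfin
    (fun q => (hM q).2.injective_quotientMap (hM q).1 (hTq q))
    (fun q => (hM q).2.exists_iterate_quotientMap_eq (hM q).1 (hTq q) (hErg q))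
    fun q _ r _ hqr => PadicInt.coprime_natCard_quotient (Nat.Primes.coe_nat_injective.ne hqr)
      (hM q).1 (hM r).1
end
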